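/- Let X ∈ ℝ^{d×N}, let X_p be its best rank-p approximation (truncated SVD), and let (Ã, B̃) minimize ‖X_p − X_p A B‖_F over column stochastic A ∈ ℝ^{N×k}, B ∈ ℝ^{k×N}. Then (1/√N)‖X − XÃB̃‖_F ≤ opt(X) + 4σ_{p+1}(X), where opt(X) is the minimum of (1/√N)‖X − XAB‖_F over column stochastic A, B and σ_{p+1}(X) is the (p+1)-st singular value of X. -/

import Mathlib

open Matrix

def ColStoch {m n : Type*} [Fintype m] [Fintype n] (M : Matrix m n ℝ) : Prop :=
  (∀ i j, 0 ≤ M i j) ∧ ∀ j, ∑ i, M i j = 1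

noncomputable def frob {m n : Type*} [Fintype m] [Fintype n] (M : Matrix m n ℝ) : ℝ :=
  Real.sqrt (∑ i, ∑ j, (M i j) ^ 2)

noncomputable def spec {m n : ℕ} (M : Matrix (Fin m) (Fin n) ℝ) : ℝ :=
  ‖LinearMap.toContinuousLinearMap (Matrix.toEuclideanLin M)‖

/-- `opt X` : the optimal value of archetypal analysis with `k` archetypes. -/
noncomputable def opt {d N : ℕ} (k : ℕ) (X : Matrix (Fin d) (Fin N) ℝ) : ℝ :=
  sInf {c | ∃ A : Matrix (Fin N) (Fin k) ℝ, ∃ B : Matrix (Fin k) (Fin N) ℝ,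
    ColStoch A ∧ ColStoch B ∧ c = (1 / Real.sqrt N) * frob (X - X * A * B)}

/-- `sigmaSucc p X` : the `(p+1)`-st singular value of `X`, characterized via
Eckart–Young as the best rank-`p` approximation error in spectral norm. -/
noncomputable def sigmaSucc {d N : ℕ} (p : ℕ) (X : Matrix (Fin d) (Fin N) ℝ) : ℝ :=
  sInf {c | ∃ Y : Matrix (Fin d) (Fin N) ℝ, Y.rank ≤ p ∧ c = spec (X - Y)}

/-!
For a column-stochastic `C`, every column of `E * C` is the image under `E` of a probability
vector, whose Euclidean norm is at most `1`; hence `‖E C‖_F ≤ √N ‖E‖₂`. Writing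
`X - X C = (X - X_p) - (X - X_p) C + (X_p - X_p C)`, the residual `‖X - X C‖_F` moves by at most
`2 √N σ_{p+1}(X)` when `X` is replaced by `X_p`. Going from `X` to `X_p` at `(Ã, B̃)`, using the
optimality of `(Ã, B̃)` for `X_p`, and going back at an arbitrary `(A, B)` costs `4 √N σ_{p+1}(X)`.
-/

section FrobeniusNorm

attribute [local instance] Matrix.frobeniusNormedAddCommGroup

variable {m n : Type*} [Fintype m] [Fintype n]

lemma frob_eq_norm (M : Matrix m n ℝ) : frob M = ‖M‖ := by
  simp only [frob, frobenius_norm_def, Real.sqrt_eq_rpow, Real.rpow_two, Real.norm_eq_abs, sq_abs]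

lemma frob_add_le (M M' : Matrix m n ℝ) : frob (M + M') ≤ frob M + frob M' := by
  simpa only [frob_eq_norm] using norm_add_le M M'

lemma frob_sub_le (M M' : Matrix m n ℝ) : frob (M - M') ≤ frob M + frob M' := by
  simpa only [frob_eq_norm] using norm_sub_le M M'

end FrobeniusNorm

lemma spec_nonneg {m n : ℕ} (M : Matrix (Fin m) (Fin n) ℝ) : 0 ≤ spec M := norm_nonneg _

lemma spec_sub_comm {m n : ℕ} (M M' : Matrix (Fin m) (Fin n) ℝ) :
    spec (M - M') = spec (M' - M) := by
  rw [spec, spec, ← neg_sub, map_neg, map_neg, norm_neg]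

lemma ColStoch.mul {l m n : Type*} [Fintype l] [Fintype m] [Fintype n]
    {A : Matrix l m ℝ} {B : Matrix m n ℝ} (hA : ColStoch A) (hB : ColStoch B) :
    ColStoch (A * B) := by
  refine ⟨fun i j => Finset.sum_nonneg fun l _ => mul_nonneg (hA.1 i l) (hB.1 l j), fun j => ?_⟩
  simp only [mul_apply]
  rw [Finset.sum_comm]
  simp only [← Finset.sum_mul, hA.2, one_mul, hB.2]

lemma colStoch_one {n : Type*} [Fintype n] [DecidableEq n] : ColStoch (1 : Matrix n n ℝ) :=
  ⟨fun i j => by by_cases h : i = j <;> simp [one_apply, h], fun j => by simp [one_apply]⟩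

lemma norm_toLp_le_one_of_sum_eq_one {n : Type*} [Fintype n] {w : n → ℝ}
    (h0 : ∀ i, 0 ≤ w i) (h1 : ∑ i, w i = 1) : ‖(WithLp.toLp 2 w : EuclideanSpace ℝ n)‖ ≤ 1 := by
  have hle : ∀ i, w i ≤ 1 := fun i =>
    h1 ▸ Finset.single_le_sum (fun j _ => h0 j) (Finset.mem_univ i)
  rw [EuclideanSpace.norm_eq, Real.sqrt_le_one]
  calc ∑ i, ‖w i‖ ^ 2 ≤ ∑ i, w i := Finset.sum_le_sum fun i _ => by
        rw [Real.norm_of_nonneg (h0 i)]; nlinarith [h0 i, hle i]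
    _ = 1 := h1

lemma sum_sq_mulVec_le_spec_sq {m n : ℕ} (E : Matrix (Fin m) (Fin n) ℝ) {w : Fin n → ℝ}
    (h0 : ∀ i, 0 ≤ w i) (h1 : ∑ i, w i = 1) : ∑ i, (E *ᵥ w) i ^ 2 ≤ spec E ^ 2 := by
  have hop : ‖(WithLp.toLp 2 (E *ᵥ w) : EuclideanSpace ℝ (Fin m))‖ ≤ spec E :=
    calc _ ≤ spec E * ‖(WithLp.toLp 2 w : EuclideanSpace ℝ (Fin n))‖ :=
          (toEuclideanLin E).toContinuousLinearMap.le_opNorm _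
      _ ≤ spec E * 1 := by gcongr; exacts [spec_nonneg E, norm_toLp_le_one_of_sum_eq_one h0 h1]
      _ = spec E := mul_one _
  have := pow_le_pow_left₀ (norm_nonneg _) hop 2
  simpa only [EuclideanSpace.norm_sq_eq, Real.norm_eq_abs, sq_abs] using this

lemma frob_mul_le_of_colStoch {m n : ℕ} {ι : Type*} [Fintype ι] (E : Matrix (Fin m) (Fin n) ℝ)
    {C : Matrix (Fin n) ι ℝ} (hC : ColStoch C) :
    frob (E * C) ≤ Real.sqrt (Fintype.card ι) * spec E := by
  have hcol : ∀ j, ∑ i, (E * C) i j ^ 2 ≤ spec E ^ 2 := fun j =>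
    sum_sq_mulVec_le_spec_sq E (w := fun l => C l j) (fun l => hC.1 l j) (hC.2 j)
  calc frob (E * C) = Real.sqrt (∑ j, ∑ i, (E * C) i j ^ 2) := by rw [frob, Finset.sum_comm]
    _ ≤ Real.sqrt (∑ _j : ι, spec E ^ 2) :=
        Real.sqrt_le_sqrt (Finset.sum_le_sum fun j _ => hcol j)
    _ = Real.sqrt (Fintype.card ι) * spec E := by
        rw [Finset.sum_const, Finset.card_univ, nsmul_eq_mul, Real.sqrt_mul (Nat.cast_nonneg _),
          Real.sqrt_sq (spec_nonneg E)]

lemma frob_le_sqrt_mul_spec {m n : ℕ} (E : Matrix (Fin m) (Fin n) ℝ) :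
    frob E ≤ Real.sqrt n * spec E := by
  simpa using frob_mul_le_of_colStoch E colStoch_one

lemma frob_sub_mul_le_of_colStoch {d N : ℕ} (X Y : Matrix (Fin d) (Fin N) ℝ)
    {C : Matrix (Fin N) (Fin N) ℝ} (hC : ColStoch C) :
    frob (X - X * C) ≤ frob (Y - Y * C) + 2 * (Real.sqrt N * spec (X - Y)) := by
  have hsplit : X - X * C = (X - Y) - (X - Y) * C + (Y - Y * C) := by
    rw [Matrix.sub_mul]; abel
  have h1 := frob_le_sqrt_mul_spec (X - Y)
  have h2 := frob_mul_le_of_colStoch (X - Y) hC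
  rw [Fintype.card_fin] at h2
  calc frob (X - X * C) ≤ frob (X - Y) + frob ((X - Y) * C) + frob (Y - Y * C) := by
        rw [hsplit]; exact (frob_add_le _ _).trans (by gcongr; exact frob_sub_le _ _)
    _ ≤ _ := by linarith

lemma frob_sub_mul_le_of_frob_le {d N : ℕ} {X Y : Matrix (Fin d) (Fin N) ℝ}
    {C C' : Matrix (Fin N) (Fin N) ℝ} (hC : ColStoch C) (hC' : ColStoch C')
    (hY : frob (Y - Y * C) ≤ frob (Y - Y * C')) :
    frob (X - X * C) ≤ frob (X - X * C') + 4 * (Real.sqrt N * spec (X - Y)) := by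
  have h1 := frob_sub_mul_le_of_colStoch X Y hC
  have h2 := frob_sub_mul_le_of_colStoch Y X hC'
  rw [spec_sub_comm] at h2
  linarith

lemma le_opt_of_forall_le {d N k : ℕ} {X : Matrix (Fin d) (Fin N) ℝ} {c : ℝ}
    {A₀ : Matrix (Fin N) (Fin k) ℝ} {B₀ : Matrix (Fin k) (Fin N) ℝ}
    (hA₀ : ColStoch A₀) (hB₀ : ColStoch B₀)
    (h : ∀ (A : Matrix (Fin N) (Fin k) ℝ) (B : Matrix (Fin k) (Fin N) ℝ), ColStoch A → ColStoch B →
      c ≤ (1 / Real.sqrt N) * frob (X - X * A * B)) :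
    c ≤ opt k X :=
  le_csInf ⟨_, A₀, B₀, hA₀, hB₀, rfl⟩ fun _ ⟨A, B, hA, hB, hc⟩ => hc ▸ h A B hA hB

theorem aa_truncated_svd_general {d N k : ℕ} (p : ℕ) (X Xp : Matrix (Fin d) (Fin N) ℝ)
    (hbest : spec (X - Xp) = sigmaSucc p X)
    (At : Matrix (Fin N) (Fin k) ℝ) (Bt : Matrix (Fin k) (Fin N) ℝ)
    (hAt : ColStoch At) (hBt : ColStoch Bt)
    (hmin : ∀ A : Matrix (Fin N) (Fin k) ℝ, ∀ B : Matrix (Fin k) (Fin N) ℝ,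
      ColStoch A → ColStoch B →
      frob (Xp - Xp * At * Bt) ≤ frob (Xp - Xp * A * B)) :
    (1 / Real.sqrt N) * frob (X - X * At * Bt) ≤ opt k X + 4 * sigmaSucc p X := by
  rw [← hbest]
  set σ := spec (X - Xp)
  -- an inequality rather than an equality, since `1 / √0 = 0`
  have hscale : 1 / Real.sqrt N * Real.sqrt N ≤ 1 := by
    rw [one_div]; exact inv_mul_le_one
  have hpair : ∀ (A : Matrix (Fin N) (Fin k) ℝ) (B : Matrix (Fin k) (Fin N) ℝ), ColStoch A →
      ColStoch B → (1 / Real.sqrt N) * frob (X - X * At * Bt) ≤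
        (1 / Real.sqrt N) * frob (X - X * A * B) + 4 * σ := by
    intro A B hA hB
    have hperturb := frob_sub_mul_le_of_frob_le (X := X) (hAt.mul hBt) (hA.mul hB)
      (by simpa only [Matrix.mul_assoc] using hmin A B hA hB)
    simp only [← Matrix.mul_assoc] at hperturb
    calc (1 / Real.sqrt N) * frob (X - X * At * Bt)
        ≤ (1 / Real.sqrt N) * (frob (X - X * A * B) + 4 * (Real.sqrt N * σ)) := by gcongr
      _ = (1 / Real.sqrt N) * frob (X - X * A * B) + 4 * (1 / Real.sqrt N * Real.sqrt N * σ) := by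
        ring
      _ ≤ (1 / Real.sqrt N) * frob (X - X * A * B) + 4 * σ := by
        gcongr; exact mul_le_of_le_one_left (spec_nonneg _) hscale
  linarith [le_opt_of_forall_le hAt hBt fun A B hA hB => sub_le_iff_le_add.mpr (hpair A B hA hB)]

/-- Archetypal analysis applied to the truncated SVD `X_p` of `X` yields a
near-optimal solution: `(1/√N)‖X − XÃB̃‖_F ≤ opt(X) + 4σ_{p+1}(X)`. -/
theorem aa_truncated_svd {d N k : ℕ} (p : ℕ) (X Xp : Matrix (Fin d) (Fin N) ℝ)
    (hrank : Xp.rank ≤ p) (hbest : spec (X - Xp) = sigmaSucc p X)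
    (At : Matrix (Fin N) (Fin k) ℝ) (Bt : Matrix (Fin k) (Fin N) ℝ)
    (hAt : ColStoch At) (hBt : ColStoch Bt)
    (hmin : ∀ A : Matrix (Fin N) (Fin k) ℝ, ∀ B : Matrix (Fin k) (Fin N) ℝ,
      ColStoch A → ColStoch B →
      frob (Xp - Xp * At * Bt) ≤ frob (Xp - Xp * A * B)) :
    (1 / Real.sqrt N) * frob (X - X * At * Bt) ≤ opt k X + 4 * sigmaSucc p X :=
  aa_truncated_svd_general p X Xp hbest At Bt hAt hBt hmin
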